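/- arXiv:0707.4085 — 4 statements merged into one kernel-verified Lean document; each statement's English description precedes it below -/
import Mathlib

section
/- Let G and H be graphs on disjoint vertex sets, and let G₀ and H₀ be induced subgraphs of G and H with α(G₀) = α(G) − 1 and α(H₀) = α(H) − 1. Then the 1-join J = j(G,G₀,H,H₀) satisfies α(J) = α(G) + α(H) − 1. -/
open SimpleGraph

/-- The stability (independence) number of the subgraph of `G` induced on the
vertex set `S`: the maximum cardinality of a stable (independent) subset of `S`. -/
noncomputable def alphaOn {V : Type*} [Fintype V] (G : SimpleGraph V) (S : Set V) : ℕ :=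
  sSup {n | ∃ s : Finset V, ↑s ⊆ S ∧ (∀ u ∈ s, ∀ v ∈ s, ¬ G.Adj u v) ∧ s.card = n}

/-- The stability (independence) number `α(G)` of `G`. -/
noncomputable def alphaNum {V : Type*} [Fintype V] (G : SimpleGraph V) : ℕ :=
  alphaOn G Set.univ

/-- The edge `{u, v}` of `G` is an α-critical edge: deleting it increases the
stability number by one. -/
def IsCriticalEdge {V : Type*} [Fintype V] (G : SimpleGraph V) (u v : V) : Prop :=
  G.Adj u v ∧ alphaNum (G.deleteEdges {s(u, v)}) = alphaNum G + 1

/-- `G` is an α-critical graph: every edge is α-critical. -/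
def IsAlphaCritical {V : Type*} [Fintype V] (G : SimpleGraph V) : Prop :=
  ∀ u v, G.Adj u v → alphaNum (G.deleteEdges {s(u, v)}) = alphaNum G + 1

/-- `S` induces a maximal induced subgraph of `G` with stability number `α(G) - 1`:
`α(G[S]) = α(G) - 1` and adding any further vertex raises the stability number to `α(G)`. -/
def IsMaxAlphaSub {V : Type*} [Fintype V] (G : SimpleGraph V) (S : Set V) : Prop :=
  alphaOn G S + 1 = alphaNum G ∧ ∀ w ∉ S, alphaOn G (insert w S) = alphaNum G

/-- The 1-join `j(G, G₀, H, H₀)` of `G` and `H`, where `A = V(G₀)` and `B = V(H₀)`: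
the disjoint union of `G` and `H` together with all edges between `V(G) ∖ A` and
`V(H) ∖ B`. -/
def oneJoin {α β : Type*} (G : SimpleGraph α) (H : SimpleGraph β)
    (A : Set α) (B : Set β) : SimpleGraph (α ⊕ β) :=
  SimpleGraph.fromRel (fun x y =>
    (∃ a b, x = Sum.inl a ∧ y = Sum.inl b ∧ G.Adj a b) ∨
    (∃ a b, x = Sum.inr a ∧ y = Sum.inr b ∧ H.Adj a b) ∨
    (∃ a b, x = Sum.inl a ∧ y = Sum.inr b ∧ a ∉ A ∧ b ∉ B))

/-- The edge-vertex composition `c(G, e, H, v)` with `e = {v₁, v₂}` and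
`N_H(v) = U₁ ⊔ U₂`: vertex set `V(G) ⊔ (V(H) ∖ {v})`, edge set
`(E(G) ∖ {e}) ∪ E(H - v) ∪ {v₁u : u ∈ U₁} ∪ {v₂u : u ∈ U₂}`. -/
def evComp {α β : Type*} (G : SimpleGraph α) (v₁ v₂ : α) (H : SimpleGraph β) (v : β)
    (U₁ U₂ : Set β) : SimpleGraph (α ⊕ {b : β // b ≠ v}) :=
  SimpleGraph.fromRel (fun x y =>
    (∃ a b, x = Sum.inl a ∧ y = Sum.inl b ∧ G.Adj a b ∧ s(a, b) ≠ s(v₁, v₂)) ∨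
    (∃ a b : {b : β // b ≠ v}, x = Sum.inr a ∧ y = Sum.inr b ∧ H.Adj a b) ∨
    (∃ b : {b : β // b ≠ v}, x = Sum.inl v₁ ∧ y = Sum.inr b ∧ (b : β) ∈ U₁) ∨
    (∃ b : {b : β // b ≠ v}, x = Sum.inl v₂ ∧ y = Sum.inr b ∧ (b : β) ∈ U₂))

/-- The splitting `s(H, v)` of the vertex `v` of `H`, with `N_H(v) = N₁ ⊔ N₂`.
The new vertices `v′`, `v″`, `u` are represented by `Sum.inr 0`, `Sum.inr 1`,
`Sum.inr 2` respectively. -/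
def splitting {β : Type*} (H : SimpleGraph β) (v : β) (N₁ N₂ : Set β) :
    SimpleGraph ({b : β // b ≠ v} ⊕ Fin 3) :=
  SimpleGraph.fromRel (fun x y =>
    (∃ a b : {b : β // b ≠ v}, x = Sum.inl a ∧ y = Sum.inl b ∧ H.Adj a b) ∨
    (∃ a : {b : β // b ≠ v}, x = Sum.inl a ∧ y = Sum.inr 0 ∧ (a : β) ∈ N₁) ∨
    (∃ a : {b : β // b ≠ v}, x = Sum.inl a ∧ y = Sum.inr 1 ∧ (a : β) ∈ N₂) ∨
    (x = Sum.inr 0 ∧ y = Sum.inr 2) ∨ (x = Sum.inr 1 ∧ y = Sum.inr 2))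

/-- The duplication `d(G, v)` of the vertex `v` of `G`: a new vertex `v′`
(represented by `Sum.inr ()`) is added, adjacent exactly to the closed
neighborhood `N_G[v]`. -/
def duplication {α : Type*} (G : SimpleGraph α) (v : α) : SimpleGraph (α ⊕ Unit) :=
  SimpleGraph.fromRel (fun x y =>
    (∃ a b, x = Sum.inl a ∧ y = Sum.inl b ∧ G.Adj a b) ∨
    (∃ a, x = Sum.inl a ∧ y = Sum.inr () ∧ a ∈ insert v (G.neighborSet v)))

/-- A graph is duplication free iff it contains no pair of adjacent vertices
with equal closed neighborhoods. -/
def DuplicationFree {α : Type*} (G : SimpleGraph α) : Prop :=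
  ∀ u v, G.Adj u v → insert u (G.neighborSet u) ≠ insert v (G.neighborSet v)

/-- `G` is 2-connected: it has at least three vertices and the deletion of any
single vertex leaves it connected. -/
def TwoConnected {V : Type*} [Fintype V] (G : SimpleGraph V) : Prop :=
  3 ≤ Fintype.card V ∧ ∀ x : V, (G.induce {x}ᶜ).Connected

lemma alphaOn_spec {V : Type*} [Fintype V] (G : SimpleGraph V) (S : Set V) :
    ∃ s : Finset V, ↑s ⊆ S ∧ (∀ u ∈ s, ∀ v ∈ s, ¬ G.Adj u v) ∧ s.card = alphaOn G S := by
  have h : alphaOn G S ∈ {n | ∃ s : Finset V, ↑s ⊆ S ∧ (∀ u ∈ s, ∀ v ∈ s, ¬ G.Adj u v) ∧ s.card = n} := by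
    apply Nat.sSup_mem
    · exact ⟨0, ∅, by simp⟩
    · exact ⟨Fintype.card V, fun n ⟨s, _, _, h⟩ => h ▸ s.card_le_univ⟩
  exact h

lemma card_le_alphaOn {V : Type*} [Fintype V] (G : SimpleGraph V) (S : Set V)
    (s : Finset V) (hs : ↑s ⊆ S) (hind : ∀ u ∈ s, ∀ v ∈ s, ¬ G.Adj u v) :
    s.card ≤ alphaOn G S :=
  le_csSup ⟨Fintype.card V, fun n ⟨t, _, _, h⟩ => h ▸ t.card_le_univ⟩ ⟨s, hs, hind, rfl⟩

/-- If `α(G₀) = α(G) - 1` and `α(H₀) = α(H) - 1`, then the 1-join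
`J = j(G, G₀, H, H₀)` satisfies `α(J) = α(G) + α(H) - 1`. -/
theorem alpha_oneJoin {α β : Type*} [Fintype α] [Fintype β]
    (G : SimpleGraph α) (H : SimpleGraph β) (A : Set α) (B : Set β)
    (hA : alphaOn G A + 1 = alphaNum G) (hB : alphaOn H B + 1 = alphaNum H) :
    alphaNum (oneJoin G H A B) + 1 = alphaNum G + alphaNum H := by
  obtain ⟨sA, hsA_sub, hsA_ind, hsA_card⟩ := alphaOn_spec G A
  obtain ⟨sH, -, hsH_ind, hsH_card⟩ := alphaOn_spec H Set.univ
  have hlow : alphaOn G A + alphaNum H ≤ alphaNum (oneJoin G H A B) := by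
    have hind : ∀ u ∈ sA.disjSum sH, ∀ v ∈ sA.disjSum sH, ¬ (oneJoin G H A B).Adj u v := by
      intro u hu v hv hadj
      rw [oneJoin, SimpleGraph.fromRel_adj] at hadj
      obtain ⟨hne, h | h⟩ := hadj <;>
        rcases h with ⟨a, b, rfl, rfl, hab⟩ | ⟨a, b, rfl, rfl, hab⟩ | ⟨a, b, rfl, rfl, haA, hbB⟩ <;>
        simp only [Finset.mem_disjSum, Sum.inl.injEq, Sum.inr.injEq, exists_eq_right,
          reduceCtorEq, and_false, exists_false, or_false, false_or] at hu hv <;>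
        first
        | exact hsA_ind _ hu _ hv hab
        | exact hsH_ind _ hu _ hv hab
        | exact hsA_ind _ hv _ hu hab
        | exact hsH_ind _ hv _ hu hab
        | exact haA (hsA_sub hu)
        | exact haA (hsA_sub hv)
    have h := card_le_alphaOn (oneJoin G H A B) Set.univ (sA.disjSum sH) (by simp) hind
    rw [Finset.card_disjSum, hsA_card, hsH_card] at h
    exact h
  have hup : alphaNum (oneJoin G H A B) + 1 ≤ alphaNum G + alphaNum H := by
    obtain ⟨s, -, hind, hcard⟩ := alphaOn_spec (oneJoin G H A B) Set.univ
    have hL : ∀ a ∈ s.toLeft, ∀ b ∈ s.toLeft, ¬ G.Adj a b := by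
      intro a ha b hb hab
      exact hind _ (Finset.mem_toLeft.1 ha) _ (Finset.mem_toLeft.1 hb)
        (by rw [oneJoin, SimpleGraph.fromRel_adj]
            exact ⟨by simpa using hab.ne, Or.inl (Or.inl ⟨a, b, rfl, rfl, hab⟩)⟩)
    have hR : ∀ a ∈ s.toRight, ∀ b ∈ s.toRight, ¬ H.Adj a b := by
      intro a ha b hb hab
      exact hind _ (Finset.mem_toRight.1 ha) _ (Finset.mem_toRight.1 hb)
        (by rw [oneJoin, SimpleGraph.fromRel_adj]
            exact ⟨by simpa using hab.ne, Or.inl (Or.inr (Or.inl ⟨a, b, rfl, rfl, hab⟩))⟩)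
    have hsum := Finset.card_toLeft_add_card_toRight (u := s)
    by_cases hcase : (↑s.toLeft : Set α) ⊆ A
    · have h1 := card_le_alphaOn G A s.toLeft hcase hL
      have h2 := card_le_alphaOn H Set.univ s.toRight (by simp) hR
      have : alphaNum (oneJoin G H A B) ≤ alphaOn G A + alphaNum H := by
        rw [alphaNum, ← hcard, ← hsum]; exact Nat.add_le_add h1 h2
      omega
    · rw [Set.not_subset] at hcase
      obtain ⟨a, haL, haA⟩ := hcase
      have hRB : (↑s.toRight : Set β) ⊆ B := by
        intro b hb
        by_contra hbB
        refine hind _ (Finset.mem_toLeft.1 (by exact_mod_cast haL)) _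
          (Finset.mem_toRight.1 (by exact_mod_cast hb)) ?_
        rw [oneJoin, SimpleGraph.fromRel_adj]
        exact ⟨by simp, Or.inl (Or.inr (Or.inr ⟨a, b, rfl, rfl, haA, hbB⟩))⟩
      have h1 := card_le_alphaOn G Set.univ s.toLeft (by simp) hL
      have h2 := card_le_alphaOn H B s.toRight hRB hR
      have : alphaNum (oneJoin G H A B) ≤ alphaNum G + alphaOn H B := by
        rw [alphaNum, ← hcard, ← hsum]; exact Nat.add_le_add h1 h2
      omega
  have hHu : alphaNum H = alphaOn H Set.univ := rfl
  omega
end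

section
/- Let G and H be graphs on disjoint vertex sets, and let G₀ and H₀ be induced subgraphs of G and H with α(G₀) = α(G) − 1 and α(H₀) = α(H) − 1. If conditions (i)–(iii) hold for the data (G,G₀,H,H₀), then the 1-join J = j(G,G₀,H,H₀) is an α-critical graph. -/
open SimpleGraph

section Helpers
variable {V : Type*} [Fintype V]

private lemma alpha_bdd (G : SimpleGraph V) (S : Set V) :
    BddAbove {n | ∃ s : Finset V, ↑s ⊆ S ∧ (∀ u ∈ s, ∀ v ∈ s, ¬ G.Adj u v) ∧ s.card = n} := by
  refine ⟨Fintype.card V, ?_⟩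
  rintro n ⟨s, -, -, rfl⟩
  exact le_trans s.card_le_univ (le_of_eq Finset.card_univ)

private lemma alpha_ne (G : SimpleGraph V) (S : Set V) :
    {n | ∃ s : Finset V, ↑s ⊆ S ∧ (∀ u ∈ s, ∀ v ∈ s, ¬ G.Adj u v) ∧ s.card = n}.Nonempty := by
  exact ⟨0, ∅, by simp, by simp, by simp⟩

lemma alphaOn_exists (G : SimpleGraph V) (S : Set V) :
    ∃ s : Finset V, ↑s ⊆ S ∧ (∀ u ∈ s, ∀ v ∈ s, ¬ G.Adj u v) ∧ s.card = alphaOn G S :=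
  Nat.sSup_mem (alpha_ne G S) (alpha_bdd G S)

lemma le_alphaOn (G : SimpleGraph V) (S : Set V) {s : Finset V} (h1 : ↑s ⊆ S)
    (h2 : ∀ u ∈ s, ∀ v ∈ s, ¬ G.Adj u v) : s.card ≤ alphaOn G S :=
  le_csSup (alpha_bdd G S) ⟨s, h1, h2, rfl⟩

lemma alphaOn_le (G : SimpleGraph V) (S : Set V) {n : ℕ}
    (h : ∀ s : Finset V, ↑s ⊆ S → (∀ u ∈ s, ∀ v ∈ s, ¬ G.Adj u v) → s.card ≤ n) :
    alphaOn G S ≤ n :=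
  csSup_le' (by rintro m ⟨s, h1, h2, rfl⟩; exact h s h1 h2)

lemma alphaOn_mono (G : SimpleGraph V) {S T : Set V} (h : S ⊆ T) :
    alphaOn G S ≤ alphaOn G T :=
  alphaOn_le _ _ fun s h1 h2 => le_alphaOn _ _ (h1.trans h) h2

lemma alphaOn_deleteEdge_le (G : SimpleGraph V) (S : Set V) (u v : V) :
    alphaOn (G.deleteEdges {s(u,v)}) S ≤ alphaOn G S + 1 := by
  classical
  apply alphaOn_le
  intro s h1 h2
  by_cases hu : u ∈ s
  · have h3 : ∀ x ∈ s.erase u, ∀ y ∈ s.erase u, ¬ G.Adj x y := by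
      intro x hx y hy hxy
      have := h2 x (Finset.mem_of_mem_erase hx) y (Finset.mem_of_mem_erase hy)
      rw [SimpleGraph.deleteEdges_adj] at this
      push_neg at this
      have he := this hxy
      simp only [Set.mem_singleton_iff, Sym2.eq_iff] at he
      rcases he with ⟨rfl, rfl⟩ | ⟨rfl, rfl⟩
      · exact Finset.ne_of_mem_erase hx rfl
      · exact Finset.ne_of_mem_erase hy rfl
    have hle := le_alphaOn G S
      (fun x hx => h1 (Finset.mem_coe.mpr
        (Finset.erase_subset _ _ (Finset.mem_coe.mp hx)))) h3
    calc s.card = (s.erase u).card + 1 := (Finset.card_erase_add_one hu).symm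
      _ ≤ alphaOn G S + 1 := by omega
  · have h3 : ∀ x ∈ s, ∀ y ∈ s, ¬ G.Adj x y := by
      intro x hx y hy hxy
      have := h2 x hx y hy
      rw [SimpleGraph.deleteEdges_adj] at this
      push_neg at this
      have he := this hxy
      simp only [Set.mem_singleton_iff, Sym2.eq_iff] at he
      rcases he with ⟨rfl, rfl⟩ | ⟨rfl, rfl⟩
      · exact hu hx
      · exact hu hy
    exact le_trans (le_alphaOn G S h1 h3) (Nat.le_succ _)

end Helpers

section JoinAdj
variable {α β : Type*} (G : SimpleGraph α) (H : SimpleGraph β) (A : Set α) (B : Set β)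

lemma oneJoin_adj_ll (x y : α) :
    (oneJoin G H A B).Adj (Sum.inl x) (Sum.inl y) ↔ G.Adj x y := by
  rw [oneJoin, SimpleGraph.fromRel_adj]
  constructor
  · rintro ⟨hne, h | h⟩ <;>
      rcases h with ⟨a,b,h1,h2,h3⟩|⟨a,b,h1,h2,h3⟩|⟨a,b,h1,h2,h3,h4⟩ <;>
      first
        | simp only [reduceCtorEq] at h1
        | simp only [reduceCtorEq] at h2
        | (cases h1; cases h2; first | exact h3 | exact h3.symm)
  · intro h
    exact ⟨by simpa using h.ne, Or.inl (Or.inl ⟨x, y, rfl, rfl, h⟩)⟩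

lemma oneJoin_adj_rr (x y : β) :
    (oneJoin G H A B).Adj (Sum.inr x) (Sum.inr y) ↔ H.Adj x y := by
  rw [oneJoin, SimpleGraph.fromRel_adj]
  constructor
  · rintro ⟨hne, h | h⟩ <;>
      rcases h with ⟨a,b,h1,h2,h3⟩|⟨a,b,h1,h2,h3⟩|⟨a,b,h1,h2,h3,h4⟩ <;>
      first
        | simp only [reduceCtorEq] at h1
        | simp only [reduceCtorEq] at h2
        | (cases h1; cases h2; first | exact h3 | exact h3.symm)
  · intro h
    exact ⟨by simpa using h.ne, Or.inl (Or.inr (Or.inl ⟨x, y, rfl, rfl, h⟩))⟩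

lemma oneJoin_adj_lr (x : α) (y : β) :
    (oneJoin G H A B).Adj (Sum.inl x) (Sum.inr y) ↔ x ∉ A ∧ y ∉ B := by
  rw [oneJoin, SimpleGraph.fromRel_adj]
  constructor
  · rintro ⟨hne, h | h⟩ <;>
      rcases h with ⟨a,b,h1,h2,h3⟩|⟨a,b,h1,h2,h3⟩|⟨a,b,h1,h2,h3,h4⟩ <;>
      first
        | simp only [reduceCtorEq] at h1
        | simp only [reduceCtorEq] at h2
        | (cases h1; cases h2; exact ⟨h3, h4⟩)
  · rintro ⟨h1, h2⟩
    exact ⟨by simp, Or.inl (Or.inr (Or.inr ⟨x, y, rfl, rfl, h1, h2⟩))⟩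

lemma oneJoin_adj_rl (x : β) (y : α) :
    (oneJoin G H A B).Adj (Sum.inr x) (Sum.inl y) ↔ y ∉ A ∧ x ∉ B := by
  rw [SimpleGraph.adj_comm]; exact oneJoin_adj_lr G H A B y x

end JoinAdj

section Main

lemma card_le_alpha_add {α β : Type*} [Fintype α] [Fintype β]
    (G' : SimpleGraph α) (H' : SimpleGraph β) (SA : Set α) (SB : Set β)
    (s : Finset (α ⊕ β))
    (hl : ∀ x ∈ s.toLeft, x ∈ SA)
    (hindL : ∀ x ∈ s.toLeft, ∀ y ∈ s.toLeft, ¬ G'.Adj x y)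
    (hr : ∀ x ∈ s.toRight, x ∈ SB)
    (hindR : ∀ x ∈ s.toRight, ∀ y ∈ s.toRight, ¬ H'.Adj x y) :
    s.card ≤ alphaOn G' SA + alphaOn H' SB := by
  rw [← Finset.card_toLeft_add_card_toRight]
  exact Nat.add_le_add
    (le_alphaOn _ _ (fun x hx => hl x (Finset.mem_coe.mp hx)) hindL)
    (le_alphaOn _ _ (fun x hx => hr x (Finset.mem_coe.mp hx)) hindR)

lemma alpha_ge_disjSum {α β : Type*} [Fintype α] [Fintype β]
    (J' : SimpleGraph (α ⊕ β)) (S : Finset α) (T : Finset β)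
    (hll : ∀ x ∈ S, ∀ y ∈ S, ¬ J'.Adj (Sum.inl x) (Sum.inl y))
    (hrr : ∀ x ∈ T, ∀ y ∈ T, ¬ J'.Adj (Sum.inr x) (Sum.inr y))
    (hlr : ∀ x ∈ S, ∀ y ∈ T, ¬ J'.Adj (Sum.inl x) (Sum.inr y)) :
    S.card + T.card ≤ alphaNum J' := by
  rw [← Finset.card_disjSum]
  refine le_alphaOn _ _ (Set.subset_univ _) ?_
  rintro (x | x) hx (y | y) hy hadj
  · exact hll x (Finset.inl_mem_disjSum.mp hx) y (Finset.inl_mem_disjSum.mp hy) hadj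
  · exact hlr x (Finset.inl_mem_disjSum.mp hx) y (Finset.inr_mem_disjSum.mp hy) hadj
  · exact hlr y (Finset.inl_mem_disjSum.mp hy) x (Finset.inr_mem_disjSum.mp hx) hadj.symm
  · exact hrr x (Finset.inr_mem_disjSum.mp hx) y (Finset.inr_mem_disjSum.mp hy) hadj

variable {α β : Type*} [Fintype α] [Fintype β]

lemma alphaNum_oneJoin (G : SimpleGraph α) (H : SimpleGraph β) (A : Set α) (B : Set β)
    (hA : alphaOn G A + 1 = alphaNum G) (hB : alphaOn H B + 1 = alphaNum H) :
    alphaNum (oneJoin G H A B) + 1 = alphaNum G + alphaNum H := by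
  have eG : alphaOn G Set.univ = alphaNum G := rfl
  have eH : alphaOn H Set.univ = alphaNum H := rfl
  have hle : alphaNum (oneJoin G H A B) ≤ alphaNum G + alphaOn H B := by
    apply alphaOn_le
    intro s _ hind
    have indepL : ∀ p ∈ s.toLeft, ∀ q ∈ s.toLeft, ¬ G.Adj p q := fun p hp q hq hadj =>
      hind _ (Finset.mem_toLeft.mp hp) _ (Finset.mem_toLeft.mp hq)
        ((oneJoin_adj_ll G H A B p q).mpr hadj)
    have indepR : ∀ p ∈ s.toRight, ∀ q ∈ s.toRight, ¬ H.Adj p q := fun p hp q hq hadj =>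
      hind _ (Finset.mem_toRight.mp hp) _ (Finset.mem_toRight.mp hq)
        ((oneJoin_adj_rr G H A B p q).mpr hadj)
    by_cases hcr : ∀ q ∈ s.toRight, q ∈ B
    · have := card_le_alpha_add G H Set.univ B s (fun _ _ => trivial) indepL hcr indepR
      omega
    · push_neg at hcr
      obtain ⟨q, hq, hqB⟩ := hcr
      have hl : ∀ p ∈ s.toLeft, p ∈ A := by
        intro p hp
        by_contra hpA
        exact hind _ (Finset.mem_toLeft.mp hp) _ (Finset.mem_toRight.mp hq)
          ((oneJoin_adj_lr G H A B p q).mpr ⟨hpA, hqB⟩)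
      have := card_le_alpha_add G H A Set.univ s hl indepL (fun _ _ => trivial) indepR
      omega
  have hge : alphaNum G + alphaOn H B ≤ alphaNum (oneJoin G H A B) := by
    obtain ⟨S, -, hSind, hScard⟩ := alphaOn_exists G Set.univ
    obtain ⟨T, hTB, hTind, hTcard⟩ := alphaOn_exists H B
    have key := alpha_ge_disjSum (oneJoin G H A B) S T
      (fun p hp q hq hadj => hSind p hp q hq ((oneJoin_adj_ll G H A B p q).mp hadj))
      (fun p hp q hq hadj => hTind p hp q hq ((oneJoin_adj_rr G H A B p q).mp hadj))
      (fun p _ q hq hadj =>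
        ((oneJoin_adj_lr G H A B p q).mp hadj).2 (hTB (Finset.mem_coe.mpr hq)))
    omega
  omega

lemma cross_case (G : SimpleGraph α) (H : SimpleGraph β) (A : Set α) (B : Set β)
    (hA : alphaOn G A + 1 = alphaNum G) (hB : alphaOn H B + 1 = alphaNum H)
    (hiG2 : ∀ w ∉ A, alphaOn G (insert w A) = alphaNum G)
    (hiH2 : ∀ w ∉ B, alphaOn H (insert w B) = alphaNum H)
    (x : α) (y : β) (hx : x ∉ A) (hy : y ∉ B) :
    alphaNum ((oneJoin G H A B).deleteEdges {s(Sum.inl x, Sum.inr y)}) =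
      alphaNum G + alphaNum H := by
  set J' := (oneJoin G H A B).deleteEdges {s(Sum.inl x, Sum.inr y)} with hJ'
  have eG : alphaOn G Set.univ = alphaNum G := rfl
  have eH : alphaOn H Set.univ = alphaNum H := rfl
  have hll : ∀ p q, J'.Adj (Sum.inl p) (Sum.inl q) ↔ G.Adj p q := by
    intro p q
    rw [hJ', SimpleGraph.deleteEdges_adj, oneJoin_adj_ll]
    simp [Sym2.eq_iff]
  have hrr : ∀ p q, J'.Adj (Sum.inr p) (Sum.inr q) ↔ H.Adj p q := by
    intro p q
    rw [hJ', SimpleGraph.deleteEdges_adj, oneJoin_adj_rr]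
    simp [Sym2.eq_iff]
  have hlr : ∀ p q, J'.Adj (Sum.inl p) (Sum.inr q) ↔
      (p ∉ A ∧ q ∉ B) ∧ ¬(p = x ∧ q = y) := by
    intro p q
    rw [hJ', SimpleGraph.deleteEdges_adj, oneJoin_adj_lr]
    simp [Sym2.eq_iff]
  have hub : alphaNum J' ≤ alphaNum G + alphaNum H := by
    apply alphaOn_le
    intro s _ hind
    have indepL : ∀ p ∈ s.toLeft, ∀ q ∈ s.toLeft, ¬ G.Adj p q := fun p hp q hq hadj =>
      hind _ (Finset.mem_toLeft.mp hp) _ (Finset.mem_toLeft.mp hq) ((hll p q).mpr hadj)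
    have indepR : ∀ p ∈ s.toRight, ∀ q ∈ s.toRight, ¬ H.Adj p q := fun p hp q hq hadj =>
      hind _ (Finset.mem_toRight.mp hp) _ (Finset.mem_toRight.mp hq) ((hrr p q).mpr hadj)
    by_cases hcl : ∀ p ∈ s.toLeft, p ∈ A
    · have := card_le_alpha_add G H A Set.univ s hcl indepL (fun _ _ => trivial) indepR
      omega
    · push_neg at hcl
      obtain ⟨p, hp, hpA⟩ := hcl
      by_cases hcr : ∀ q ∈ s.toRight, q ∈ B
      · have := card_le_alpha_add G H Set.univ B s (fun _ _ => trivial) indepL hcr indepR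
        omega
      · push_neg at hcr
        obtain ⟨q, hq, hqB⟩ := hcr
        have hsl : ∀ p' ∈ s.toLeft, p' ∈ insert x A := by
          intro p' hp'
          by_cases hp'A : p' ∈ A
          · exact Set.mem_insert_of_mem _ hp'A
          · have hpq : p' = x ∧ q = y := by
              by_contra hne
              exact hind _ (Finset.mem_toLeft.mp hp') _ (Finset.mem_toRight.mp hq)
                ((hlr p' q).mpr ⟨⟨hp'A, hqB⟩, hne⟩)
            exact hpq.1 ▸ Set.mem_insert _ _
        have hsr : ∀ q' ∈ s.toRight, q' ∈ insert y B := by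
          intro q' hq'
          by_cases hq'B : q' ∈ B
          · exact Set.mem_insert_of_mem _ hq'B
          · have hpq : p = x ∧ q' = y := by
              by_contra hne
              exact hind _ (Finset.mem_toLeft.mp hp) _ (Finset.mem_toRight.mp hq')
                ((hlr p q').mpr ⟨⟨hpA, hq'B⟩, hne⟩)
            exact hpq.2 ▸ Set.mem_insert _ _
        have := card_le_alpha_add G H (insert x A) (insert y B) s hsl indepL hsr indepR
        rw [hiG2 x hx, hiH2 y hy] at this
        exact this
  have hlb : alphaNum G + alphaNum H ≤ alphaNum J' := by
    obtain ⟨S, hSx, hSind, hScard⟩ := alphaOn_exists G (insert x A)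
    obtain ⟨T, hTy, hTind, hTcard⟩ := alphaOn_exists H (insert y B)
    rw [hiG2 x hx] at hScard
    rw [hiH2 y hy] at hTcard
    have key := alpha_ge_disjSum J' S T
      (fun p hp q hq hadj => hSind p hp q hq ((hll p q).mp hadj))
      (fun p hp q hq hadj => hTind p hp q hq ((hrr p q).mp hadj))
      (by
        intro p hp q hq hadj
        obtain ⟨⟨hpA, hqB⟩, hne⟩ := (hlr p q).mp hadj
        have hp' : p = x := (hSx (Finset.mem_coe.mpr hp)).resolve_right hpA
        have hq' : q = y := (hTy (Finset.mem_coe.mpr hq)).resolve_right hqB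
        exact hne ⟨hp', hq'⟩)
    omega
  exact le_antisymm hub hlb

end Main

section Side
variable {α β : Type*} [Fintype α] [Fintype β]

lemma leftEdge_case (G : SimpleGraph α) (H : SimpleGraph β) (A : Set α) (B : Set β)
    (hA : alphaOn G A + 1 = alphaNum G) (hB : alphaOn H B + 1 = alphaNum H)
    (x y : α) (hGxy : G.Adj x y)
    (hcrit : alphaNum (G.deleteEdges {s(x, y)}) = alphaNum G + 1 ∨
      alphaOn (G.deleteEdges {s(x, y)}) A = alphaOn G A + 1) :
    alphaNum ((oneJoin G H A B).deleteEdges {s(Sum.inl x, Sum.inl y)}) =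
      alphaNum G + alphaNum H := by
  set J' := (oneJoin G H A B).deleteEdges {s(Sum.inl x, Sum.inl y)} with hJ'
  set G' := G.deleteEdges {s(x, y)} with hG'
  have eG : alphaOn G Set.univ = alphaNum G := rfl
  have eH : alphaOn H Set.univ = alphaNum H := rfl
  have eG' : alphaOn G' Set.univ = alphaNum G' := rfl
  have hll : ∀ p q, J'.Adj (Sum.inl p) (Sum.inl q) ↔ G'.Adj p q := by
    intro p q
    rw [hJ', hG', SimpleGraph.deleteEdges_adj, SimpleGraph.deleteEdges_adj, oneJoin_adj_ll]
    simp [Sym2.eq_iff]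
  have hrr : ∀ p q, J'.Adj (Sum.inr p) (Sum.inr q) ↔ H.Adj p q := by
    intro p q
    rw [hJ', SimpleGraph.deleteEdges_adj, oneJoin_adj_rr]
    simp [Sym2.eq_iff]
  have hlr : ∀ p q, J'.Adj (Sum.inl p) (Sum.inr q) ↔ p ∉ A ∧ q ∉ B := by
    intro p q
    rw [hJ', SimpleGraph.deleteEdges_adj, oneJoin_adj_lr]
    simp [Sym2.eq_iff]
  have hdel1 := alphaOn_deleteEdge_le G Set.univ x y
  have hdel2 := alphaOn_deleteEdge_le G A x y
  rw [← hG'] at hdel1 hdel2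
  have hub : alphaNum J' ≤ alphaNum G + alphaNum H := by
    apply alphaOn_le
    intro s _ hind
    have indepL : ∀ p ∈ s.toLeft, ∀ q ∈ s.toLeft, ¬ G'.Adj p q := fun p hp q hq hadj =>
      hind _ (Finset.mem_toLeft.mp hp) _ (Finset.mem_toLeft.mp hq) ((hll p q).mpr hadj)
    have indepR : ∀ p ∈ s.toRight, ∀ q ∈ s.toRight, ¬ H.Adj p q := fun p hp q hq hadj =>
      hind _ (Finset.mem_toRight.mp hp) _ (Finset.mem_toRight.mp hq) ((hrr p q).mpr hadj)
    by_cases hcr : ∀ q ∈ s.toRight, q ∈ B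
    · have := card_le_alpha_add G' H Set.univ B s (fun _ _ => trivial) indepL hcr indepR
      omega
    · push_neg at hcr
      obtain ⟨q, hq, hqB⟩ := hcr
      have hsl : ∀ p ∈ s.toLeft, p ∈ A := by
        intro p hp
        by_contra hpA
        exact hind _ (Finset.mem_toLeft.mp hp) _ (Finset.mem_toRight.mp hq)
          ((hlr p q).mpr ⟨hpA, hqB⟩)
      have := card_le_alpha_add G' H A Set.univ s hsl indepL (fun _ _ => trivial) indepR
      omega
  have hlb : alphaNum G + alphaNum H ≤ alphaNum J' := by
    rcases hcrit with hc | hc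
    · obtain ⟨S, -, hSind, hScard⟩ := alphaOn_exists G' Set.univ
      obtain ⟨T, hTB, hTind, hTcard⟩ := alphaOn_exists H B
      have key := alpha_ge_disjSum J' S T
        (fun p hp q hq hadj => hSind p hp q hq ((hll p q).mp hadj))
        (fun p hp q hq hadj => hTind p hp q hq ((hrr p q).mp hadj))
        (fun p _ q hq hadj => ((hlr p q).mp hadj).2 (hTB (Finset.mem_coe.mpr hq)))
      omega
    · obtain ⟨S, hSA, hSind, hScard⟩ := alphaOn_exists G' A
      obtain ⟨T, -, hTind, hTcard⟩ := alphaOn_exists H Set.univ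
      have key := alpha_ge_disjSum J' S T
        (fun p hp q hq hadj => hSind p hp q hq ((hll p q).mp hadj))
        (fun p hp q hq hadj => hTind p hp q hq ((hrr p q).mp hadj))
        (fun p hp q _ hadj => ((hlr p q).mp hadj).1 (hSA (Finset.mem_coe.mpr hp)))
      omega
  exact le_antisymm hub hlb

lemma rightEdge_case (G : SimpleGraph α) (H : SimpleGraph β) (A : Set α) (B : Set β)
    (hA : alphaOn G A + 1 = alphaNum G) (hB : alphaOn H B + 1 = alphaNum H)
    (x y : β) (hHxy : H.Adj x y)
    (hcrit : alphaNum (H.deleteEdges {s(x, y)}) = alphaNum H + 1 ∨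
      alphaOn (H.deleteEdges {s(x, y)}) B = alphaOn H B + 1) :
    alphaNum ((oneJoin G H A B).deleteEdges {s(Sum.inr x, Sum.inr y)}) =
      alphaNum G + alphaNum H := by
  set J' := (oneJoin G H A B).deleteEdges {s(Sum.inr x, Sum.inr y)} with hJ'
  set H' := H.deleteEdges {s(x, y)} with hH'
  have eG : alphaOn G Set.univ = alphaNum G := rfl
  have eH : alphaOn H Set.univ = alphaNum H := rfl
  have eH' : alphaOn H' Set.univ = alphaNum H' := rfl
  have hll : ∀ p q, J'.Adj (Sum.inl p) (Sum.inl q) ↔ G.Adj p q := by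
    intro p q
    rw [hJ', SimpleGraph.deleteEdges_adj, oneJoin_adj_ll]
    simp [Sym2.eq_iff]
  have hrr : ∀ p q, J'.Adj (Sum.inr p) (Sum.inr q) ↔ H'.Adj p q := by
    intro p q
    rw [hJ', hH', SimpleGraph.deleteEdges_adj, SimpleGraph.deleteEdges_adj, oneJoin_adj_rr]
    simp [Sym2.eq_iff]
  have hlr : ∀ p q, J'.Adj (Sum.inl p) (Sum.inr q) ↔ p ∉ A ∧ q ∉ B := by
    intro p q
    rw [hJ', SimpleGraph.deleteEdges_adj, oneJoin_adj_lr]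
    simp [Sym2.eq_iff]
  have hdel1 := alphaOn_deleteEdge_le H Set.univ x y
  have hdel2 := alphaOn_deleteEdge_le H B x y
  rw [← hH'] at hdel1 hdel2
  have hub : alphaNum J' ≤ alphaNum G + alphaNum H := by
    apply alphaOn_le
    intro s _ hind
    have indepL : ∀ p ∈ s.toLeft, ∀ q ∈ s.toLeft, ¬ G.Adj p q := fun p hp q hq hadj =>
      hind _ (Finset.mem_toLeft.mp hp) _ (Finset.mem_toLeft.mp hq) ((hll p q).mpr hadj)
    have indepR : ∀ p ∈ s.toRight, ∀ q ∈ s.toRight, ¬ H'.Adj p q := fun p hp q hq hadj =>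
      hind _ (Finset.mem_toRight.mp hp) _ (Finset.mem_toRight.mp hq) ((hrr p q).mpr hadj)
    by_cases hcl : ∀ p ∈ s.toLeft, p ∈ A
    · have := card_le_alpha_add G H' A Set.univ s hcl indepL (fun _ _ => trivial) indepR
      omega
    · push_neg at hcl
      obtain ⟨p, hp, hpA⟩ := hcl
      have hsr : ∀ q ∈ s.toRight, q ∈ B := by
        intro q hq
        by_contra hqB
        exact hind _ (Finset.mem_toLeft.mp hp) _ (Finset.mem_toRight.mp hq)
          ((hlr p q).mpr ⟨hpA, hqB⟩)
      have := card_le_alpha_add G H' Set.univ B s (fun _ _ => trivial) indepL hsr indepR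
      omega
  have hlb : alphaNum G + alphaNum H ≤ alphaNum J' := by
    rcases hcrit with hc | hc
    · obtain ⟨S, hSA, hSind, hScard⟩ := alphaOn_exists G A
      obtain ⟨T, -, hTind, hTcard⟩ := alphaOn_exists H' Set.univ
      have key := alpha_ge_disjSum J' S T
        (fun p hp q hq hadj => hSind p hp q hq ((hll p q).mp hadj))
        (fun p hp q hq hadj => hTind p hp q hq ((hrr p q).mp hadj))
        (fun p hp q _ hadj => ((hlr p q).mp hadj).1 (hSA (Finset.mem_coe.mpr hp)))
      omega
    · obtain ⟨S, -, hSind, hScard⟩ := alphaOn_exists G Set.univ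
      obtain ⟨T, hTB, hTind, hTcard⟩ := alphaOn_exists H' B
      have key := alpha_ge_disjSum J' S T
        (fun p hp q hq hadj => hSind p hp q hq ((hll p q).mp hadj))
        (fun p hp q hq hadj => hTind p hp q hq ((hrr p q).mp hadj))
        (fun p _ q hq hadj => ((hlr p q).mp hadj).2 (hTB (Finset.mem_coe.mpr hq)))
      omega
  exact le_antisymm hub hlb

end Side

/-- If conditions (i)–(iii) hold for the data `(G, G₀, H, H₀)`,
then the 1-join `J = j(G, G₀, H, H₀)` is an α-critical graph. -/
theorem oneJoin_isAlphaCritical {α β : Type*} [Fintype α] [Fintype β]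
    (G : SimpleGraph α) (H : SimpleGraph β) (A : Set α) (B : Set β)
    (hA : alphaOn G A + 1 = alphaNum G) (hB : alphaOn H B + 1 = alphaNum H)
    -- (i) maximality of the induced subgraphs G₀ and H₀
    (hiG : IsMaxAlphaSub G A) (hiH : IsMaxAlphaSub H B)
    -- (ii) the edges of G not contained in G₀ (resp. of H not in H₀) are α-critical
    (hiiG : ∀ u v, G.Adj u v → ¬(u ∈ A ∧ v ∈ A) → IsCriticalEdge G u v)
    (hiiH : ∀ u v, H.Adj u v → ¬(u ∈ B ∧ v ∈ B) → IsCriticalEdge H u v)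
    -- (iii) every edge of G₀ is α-critical in G or in G₀ (and likewise for H₀)
    (hiiiG : ∀ u ∈ A, ∀ v ∈ A, G.Adj u v →
      IsCriticalEdge G u v ∨ alphaOn (G.deleteEdges {s(u, v)}) A = alphaOn G A + 1)
    (hiiiH : ∀ u ∈ B, ∀ v ∈ B, H.Adj u v →
      IsCriticalEdge H u v ∨ alphaOn (H.deleteEdges {s(u, v)}) B = alphaOn H B + 1) :
    IsAlphaCritical (oneJoin G H A B) := by
  intro u v huv
  have hJval := alphaNum_oneJoin G H A B hA hB
  rcases u with x | x <;> rcases v with y | y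
  · have hG := (oneJoin_adj_ll G H A B x y).mp huv
    have hcrit : alphaNum (G.deleteEdges {s(x, y)}) = alphaNum G + 1 ∨
        alphaOn (G.deleteEdges {s(x, y)}) A = alphaOn G A + 1 := by
      by_cases hxy : x ∈ A ∧ y ∈ A
      · rcases hiiiG x hxy.1 y hxy.2 hG with h | h
        · exact Or.inl h.2
        · exact Or.inr h
      · exact Or.inl (hiiG x y hG hxy).2
    have := leftEdge_case G H A B hA hB x y hG hcrit
    omega
  · obtain ⟨hx, hy⟩ := (oneJoin_adj_lr G H A B x y).mp huv
    have := cross_case G H A B hA hB hiG.2 hiH.2 x y hx hy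
    omega
  · obtain ⟨hy, hx⟩ := (oneJoin_adj_rl G H A B x y).mp huv
    rw [show s(Sum.inr x, Sum.inl y) = (s(Sum.inl y, Sum.inr x) : Sym2 (α ⊕ β)) from
      Sym2.eq_swap]
    have := cross_case G H A B hA hB hiG.2 hiH.2 y x hy hx
    omega
  · have hH := (oneJoin_adj_rr G H A B x y).mp huv
    have hcrit : alphaNum (H.deleteEdges {s(x, y)}) = alphaNum H + 1 ∨
        alphaOn (H.deleteEdges {s(x, y)}) B = alphaOn H B + 1 := by
      by_cases hxy : x ∈ B ∧ y ∈ B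
      · rcases hiiiH x hxy.1 y hxy.2 hH with h | h
        · exact Or.inl h.2
        · exact Or.inr h
      · exact Or.inl (hiiH x y hH hxy).2
    have := rightEdge_case G H A B hA hB x y hH hcrit
    omega
end

section
/- Let G and H be graphs, e = {v₁,v₂} an edge of G, v a vertex of H, and N_H(v) = U₁ ⊔ U₂ any partition of the neighborhood of v into two nonempty disjoint sets. Then the edge-vertex composition satisfies α(c(G,e,H,v)) ≤ α(G) + α(H). -/
open SimpleGraph

lemma stable_card_le_alphaNum {V : Type*} [Fintype V] (G : SimpleGraph V) (s : Finset V)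
    (h : ∀ u ∈ s, ∀ w ∈ s, ¬ G.Adj u w) : s.card ≤ alphaNum G := by
  apply le_csSup
  · exact ⟨Fintype.card V, fun n hn => by obtain ⟨t, -, -, rfl⟩ := hn; exact t.card_le_univ⟩
  · exact ⟨s, by simp, h, rfl⟩

/-- For any edge `e = {v₁, v₂}` of `G`, any vertex `v` of `H`, and
any partition `N_H(v) = U₁ ⊔ U₂` into two nonempty disjoint sets, the
edge-vertex composition satisfies `α(c(G, e, H, v)) ≤ α(G) + α(H)`. -/
theorem alpha_evComp_le {α β : Type*} [Fintype α] [Fintype β] [DecidableEq β]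
    (G : SimpleGraph α) (v₁ v₂ : α) (H : SimpleGraph β) (v : β) (U₁ U₂ : Set β)
    (he : G.Adj v₁ v₂)
    (hU : U₁ ∪ U₂ = H.neighborSet v) (hdisj : Disjoint U₁ U₂)
    (hU₁ : U₁.Nonempty) (hU₂ : U₂.Nonempty) :
    alphaNum (evComp G v₁ v₂ H v U₁ U₂) ≤ alphaNum G + alphaNum H := by
  classical
  rw [alphaNum, alphaOn]
  refine csSup_le ⟨0, ∅, by simp, by simp, rfl⟩ ?_
  rintro n ⟨s, -, hstab, rfl⟩
  -- facts from stability
  have hG : ∀ a ∈ s.toLeft, ∀ b ∈ s.toLeft, G.Adj a b → s(a, b) = s(v₁, v₂) := by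
    intro a ha b hb hab
    by_contra hne
    exact hstab _ (Finset.mem_toLeft.1 ha) _ (Finset.mem_toLeft.1 hb)
      ⟨by simp [hab.ne], Or.inl (Or.inl ⟨a, b, rfl, rfl, hab, hne⟩)⟩
  have hH : ∀ a ∈ s.toRight, ∀ b ∈ s.toRight, ¬ H.Adj a b := by
    intro a ha b hb hab
    exact hstab _ (Finset.mem_toRight.1 ha) _ (Finset.mem_toRight.1 hb)
      ⟨fun h => hab.ne (congrArg Subtype.val (Sum.inr.inj h)),
        Or.inl (Or.inr (Or.inl ⟨a, b, rfl, rfl, hab⟩))⟩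
  set t : Finset β := s.toRight.map ⟨Subtype.val, Subtype.val_injective⟩ with ht
  have htmem : ∀ x ∈ t, ∃ a : {b : β // b ≠ v}, a ∈ s.toRight ∧ (a : β) = x := by
    intro x hx
    obtain ⟨a, ha, rfl⟩ := Finset.mem_map.1 hx
    exact ⟨a, ha, rfl⟩
  have htstab : ∀ x ∈ t, ∀ y ∈ t, ¬ H.Adj x y := by
    intro x hx y hy hxy
    obtain ⟨a, ha, rfl⟩ := htmem x hx
    obtain ⟨b, hb, rfl⟩ := htmem y hy
    exact hH a ha b hb hxy
  have hcard : s.toLeft.card + t.card = s.card := by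
    rw [ht, Finset.card_map]; exact Finset.card_toLeft_add_card_toRight
  by_cases hcase : Sum.inl v₁ ∈ s ∧ Sum.inl v₂ ∈ s
  · -- both endpoints of e are in the stable set
    have hv₂ : v₂ ∈ s.toLeft := Finset.mem_toLeft.2 hcase.2
    have h1 : (s.toLeft.erase v₂).card ≤ alphaNum G := by
      apply stable_card_le_alphaNum
      intro a ha b hb hab
      have := hG a (Finset.mem_of_mem_erase ha) b (Finset.mem_of_mem_erase hb) hab
      rw [Sym2.eq_iff] at this
      rcases this with ⟨-, rfl⟩ | ⟨rfl, -⟩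
      · exact (Finset.mem_erase.1 hb).1 rfl
      · exact (Finset.mem_erase.1 ha).1 rfl
    have h1' : s.toLeft.card ≤ alphaNum G + 1 := by
      have := Finset.card_erase_add_one hv₂
      omega
    -- insert v into t
    have hvt : v ∉ t := by
      intro hv
      obtain ⟨a, -, ha⟩ := htmem v hv
      exact a.2 ha
    have h2 : (insert v t).card ≤ alphaNum H := by
      apply stable_card_le_alphaNum
      intro x hx y hy hxy
      have key : ∀ u : β, u ∈ t → ¬ H.Adj v u := by
        intro u hu hadj
        obtain ⟨a, ha, rfl⟩ := htmem u hu
        have hmem : (a : β) ∈ U₁ ∪ U₂ := by rw [hU]; exact hadj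
        rcases hmem with h₁ | h₂
        · exact hstab _ hcase.1 _ (Finset.mem_toRight.1 ha)
            ⟨by simp, Or.inl (Or.inr (Or.inr (Or.inl ⟨a, rfl, rfl, h₁⟩)))⟩
        · exact hstab _ hcase.2 _ (Finset.mem_toRight.1 ha)
            ⟨by simp, Or.inl (Or.inr (Or.inr (Or.inr ⟨a, rfl, rfl, h₂⟩)))⟩
      rcases Finset.mem_insert.1 hx with rfl | hx
      · rcases Finset.mem_insert.1 hy with rfl | hy
        · exact hxy.ne rfl
        · exact key y hy hxy
      · rcases Finset.mem_insert.1 hy with rfl | hy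
        · exact key x hx hxy.symm
        · exact htstab x hx y hy hxy
    rw [Finset.card_insert_of_notMem hvt] at h2
    omega
  · -- at most one endpoint of e in the stable set: s.toLeft is stable in G
    have h1 : s.toLeft.card ≤ alphaNum G := by
      apply stable_card_le_alphaNum
      intro a ha b hb hab
      have := hG a ha b hb hab
      rw [Sym2.eq_iff] at this
      apply hcase
      rcases this with ⟨rfl, rfl⟩ | ⟨rfl, rfl⟩
      · exact ⟨Finset.mem_toLeft.1 ha, Finset.mem_toLeft.1 hb⟩
      · exact ⟨Finset.mem_toLeft.1 hb, Finset.mem_toLeft.1 ha⟩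
    have h2 : t.card ≤ alphaNum H := stable_card_le_alphaNum H t htstab
    omega
end

section
/- Let G and H be 2-connected α-critical graphs, e = {v₁,v₂} an edge of G, v a vertex of H, and N_H(v) = U₁ ⊔ U₂ any partition of the neighborhood of v into two nonempty disjoint sets. Then the edge-vertex composition c(G,e,H,v) is an α-critical graph. -/
open SimpleGraph

/-!
Write `W = c(G, e, H, v)`. A stable set of `W` splits as `S ⊔ T` with `S` stable in `G - e` and
`T` stable in `H - v`; if `S` contains both ends of `e`, then `T` misses `N(v)` and `T + v` is
stable in `H`. Hence `α(W) ≤ α(G) + α(H)`, and equality follows from gluing a stable set of `G - e`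
of size `α(G) + 1` to a maximum stable set of `H` through `v`, minus `v`.

Deleting an edge of `W` gives again an edge-vertex composition: of `G` minus an edge, of `H` minus
an edge, or with `U₁` (or `U₂`) shrunk by one vertex. In each case α-criticality supplies the two
halves of a stable set of size `α(G) + α(H) + 1`: for an α-critical edge `xy` of `Γ` there is a
stable set of `Γ - xy` of size `α(Γ) + 1` through `x` and `y`, and a maximum stable set of `Γ`
avoiding `x` and meeting `N(x)` only in `y`. For an edge inside `H - v` whose large stable set
avoids `v`, 2-connectivity of `G` gives a maximum stable set of `G` avoiding both ends of `e`.
-/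

open scoped Finset

namespace SimpleGraph

variable {V : Type*} {Γ Γ' : SimpleGraph V} {s : Set V} {u w : V}

theorem alphaNum_eq_indepNum [Fintype V] (Γ : SimpleGraph V) : alphaNum Γ = Γ.indepNum := by
  unfold alphaNum alphaOn indepNum
  congr 1
  ext n
  simp only [Set.subset_univ, true_and, isNIndepSet_iff, isIndepSet_iff]
  refine exists_congr fun t => and_congr_left' ⟨fun h x hx y hy _ => h x hx y hy,
    fun h x hx y hy hadj => h hx hy hadj.ne hadj⟩

theorem IsIndepSet.anti (hle : Γ ≤ Γ') (h : Γ'.IsIndepSet s) : Γ.IsIndepSet s :=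
  h.mono' fun _ _ hn hadj => hn (hle hadj)

theorem IsIndepSet.of_deleteEdges (h : (Γ.deleteEdges {s(u, w)}).IsIndepSet s) (hu : u ∉ s) :
    Γ.IsIndepSet s := by
  intro x hx y hy hne hadj
  refine h hx hy hne ((deleteEdges_adj ..).2 ⟨hadj, ?_⟩)
  intro he
  rcases Sym2.eq_iff.1 he with ⟨rfl, -⟩ | ⟨-, rfl⟩
  exacts [hu hx, hu hy]

theorem IsIndepSet.not_adj_of_mem (h : Γ.IsIndepSet s) (hu : u ∈ s) (hw : w ∈ s) :
    ¬Γ.Adj u w := fun hadj => h hu hw hadj.ne hadj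

section Critical

variable [Finite V]

theorem indepNum_deleteEdges_le (u w : V) :
    (Γ.deleteEdges {s(u, w)}).indepNum ≤ Γ.indepNum + 1 := by
  classical
  obtain ⟨s, hs, hcard⟩ := (Γ.deleteEdges {s(u, w)}).exists_isNIndepSet_indepNum
  have hind : Γ.IsIndepSet ↑(s.erase u) :=
    IsIndepSet.of_deleteEdges (Set.Pairwise.mono (by simp) hs) (by simp)
  have := hind.card_le_indepNum
  have := Finset.pred_card_le_card_erase (s := s) (a := u)
  omega

variable (hcrit : (Γ.deleteEdges {s(u, w)}).indepNum = Γ.indepNum + 1)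
include hcrit

theorem exists_isNIndepSet_deleteEdges_of_critical :
    ∃ s : Finset V, (Γ.deleteEdges {s(u, w)}).IsNIndepSet (Γ.indepNum + 1) s ∧ u ∈ s ∧ w ∈ s := by
  obtain ⟨s, hs⟩ := (Γ.deleteEdges {s(u, w)}).exists_isNIndepSet_indepNum
  rw [hcrit] at hs
  refine ⟨s, hs, ?_, ?_⟩ <;> by_contra hnot
  · have := (hs.isIndepSet.of_deleteEdges hnot).card_le_indepNum
    rw [hs.card_eq] at this; omega
  · rw [Sym2.eq_swap] at hs
    have := (hs.isIndepSet.of_deleteEdges hnot).card_le_indepNum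
    rw [hs.card_eq] at this; omega

theorem exists_isNIndepSet_notMem_of_critical (huw : Γ.Adj u w) :
    ∃ s : Finset V, Γ.IsNIndepSet Γ.indepNum s ∧ u ∉ s ∧ w ∈ s ∧ ∀ t ∈ s, Γ.Adj u t → t = w := by
  classical
  obtain ⟨s, hs, hu, hw⟩ := exists_isNIndepSet_deleteEdges_of_critical hcrit
  refine ⟨s.erase u, ⟨?_, ?_⟩, s.notMem_erase u, s.mem_erase.2 ⟨huw.ne', hw⟩, ?_⟩
  · exact IsIndepSet.of_deleteEdges (Set.Pairwise.mono (by simp) hs.isIndepSet) (by simp)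
  · rw [Finset.card_erase_of_mem hu, hs.card_eq, Nat.add_sub_cancel]
  · intro t ht hut
    have hedge : s(u, t) = s(u, w) := by
      by_contra hne
      exact hs.isIndepSet.not_adj_of_mem hu (Finset.mem_of_mem_erase ht) (by simp [hut, hne])
    rcases Sym2.eq_iff.1 hedge with ⟨-, rfl⟩ | ⟨-, rfl⟩
    · rfl
    · exact absurd rfl (Finset.ne_of_mem_erase ht)

end Critical

theorem TwoConnected.exists_adj_ne [Fintype V] (h : TwoConnected Γ) {x y : V} (hxy : Γ.Adj x y) :
    ∃ w, Γ.Adj x w ∧ w ≠ y := by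
  classical
  obtain ⟨z, -, hz⟩ := Finset.exists_mem_notMem_of_card_lt_card (s := {x, y})
    (t := Finset.univ) ((Finset.card_le_two).trans_lt h.1)
  simp only [Finset.mem_insert, Finset.mem_singleton, not_or] at hz
  obtain ⟨p⟩ := (h.2 y).preconnected ⟨x, hxy.ne⟩ ⟨z, hz.2⟩
  cases p with
  | nil => exact absurd rfl hz.1
  | @cons _ w _ hadj _ => exact ⟨w, hadj, w.2⟩

theorem IsAlphaCritical.indepNum_deleteEdges [Fintype V] (h : IsAlphaCritical Γ)
    (huw : Γ.Adj u w) : (Γ.deleteEdges {s(u, w)}).indepNum = Γ.indepNum + 1 := by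
  simpa only [alphaNum_eq_indepNum] using h u w huw

/-- The neighbour `w ≠ y` of `x` supplies a maximum independent set meeting `N(x)` only in `w`,
which therefore avoids both `x` and `y`. -/
theorem IsAlphaCritical.exists_isNIndepSet_notMem_notMem [Fintype V] (hΓ : IsAlphaCritical Γ)
    (h2 : TwoConnected Γ) {x y : V} (hxy : Γ.Adj x y) :
    ∃ s : Finset V, Γ.IsNIndepSet Γ.indepNum s ∧ x ∉ s ∧ y ∉ s := by
  obtain ⟨w, hxw, hwy⟩ := h2.exists_adj_ne hxy
  obtain ⟨s, hs, hx, -, hN⟩ :=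
    exists_isNIndepSet_notMem_of_critical (hΓ.indepNum_deleteEdges hxw) hxw
  exact ⟨s, hs, hx, fun hy => hwy (hN y hy hxy).symm⟩

theorem disjoint_of_forall_adj_eq {T : Finset V} {X : Set V} (hT : ∀ t ∈ T, Γ.Adj u t → t = w)
    (hX : X ⊆ Γ.neighborSet u) (hwX : w ∉ X) : Disjoint (T : Set V) X :=
  Set.disjoint_left.2 fun t ht htX => hwX (hT t ht (hX htX) ▸ htX)

section EvComp

variable {α β : Type*} {G : SimpleGraph α} {v₁ v₂ : α} {H : SimpleGraph β} {v : β}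
  {U₁ U₂ : Set β}

@[simp] theorem evComp_adj_inl_inl {a b : α} :
    (evComp G v₁ v₂ H v U₁ U₂).Adj (.inl a) (.inl b) ↔ G.Adj a b ∧ s(a, b) ≠ s(v₁, v₂) := by
  simp [evComp, adj_comm G b]
  grind [Adj.ne]

@[simp] theorem evComp_adj_inr_inr {a b : {b : β // b ≠ v}} :
    (evComp G v₁ v₂ H v U₁ U₂).Adj (.inr a) (.inr b) ↔ H.Adj a b := by
  simp only [evComp, fromRel_adj]
  simp [adj_comm H b]
  exact fun h hab => h.ne (congrArg Subtype.val hab)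

@[simp] theorem evComp_adj_inl_inr {a : α} {t : {b : β // b ≠ v}} :
    (evComp G v₁ v₂ H v U₁ U₂).Adj (.inl a) (.inr t) ↔ a = v₁ ∧ ↑t ∈ U₁ ∨ a = v₂ ∧ ↑t ∈ U₂ := by
  simp [evComp, Subtype.ext_iff, t.2]

@[simp] theorem evComp_adj_inr_inl {a : α} {t : {b : β // b ≠ v}} :
    (evComp G v₁ v₂ H v U₁ U₂).Adj (.inr t) (.inl a) ↔ a = v₁ ∧ ↑t ∈ U₁ ∨ a = v₂ ∧ ↑t ∈ U₂ := by
  rw [adj_comm, evComp_adj_inl_inr]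

theorem evComp_comm : evComp G v₁ v₂ H v U₁ U₂ = evComp G v₂ v₁ H v U₂ U₁ := by
  ext (a | a) (b | b) <;> simp [Sym2.eq_swap, or_comm]

theorem evComp_deleteEdges_inl (a b : α) :
    (evComp G v₁ v₂ H v U₁ U₂).deleteEdges {s(.inl a, .inl b)} =
      evComp (G.deleteEdges {s(a, b)}) v₁ v₂ H v U₁ U₂ := by
  ext (x | x) (y | y) <;> simp
  tauto

theorem evComp_deleteEdges_inr (a b : {b : β // b ≠ v}) :
    (evComp G v₁ v₂ H v U₁ U₂).deleteEdges {s(.inr a, .inr b)} =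
      evComp G v₁ v₂ (H.deleteEdges {s(↑a, ↑b)}) v U₁ U₂ := by
  ext (x | x) (y | y) <;> simp [Subtype.ext_iff]

theorem evComp_deleteEdges_inl_inr (h : v₁ ≠ v₂) (t : {b : β // b ≠ v}) :
    (evComp G v₁ v₂ H v U₁ U₂).deleteEdges {s(.inl v₁, .inr t)} =
      evComp G v₁ v₂ H v (U₁ \ {↑t}) U₂ := by
  ext (x | x) (y | y) <;> simp [Subtype.ext_iff] <;> grind

theorem isIndepSet_evComp_disjSum_iff [DecidableEq β] {S : Finset α} {T : Finset β}
    (hvT : v ∉ T) :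
    (evComp G v₁ v₂ H v U₁ U₂).IsIndepSet ↑(S.disjSum (T.subtype (· ≠ v))) ↔
      (G.deleteEdges {s(v₁, v₂)}).IsIndepSet ↑S ∧ H.IsIndepSet ↑T ∧
        (v₁ ∈ S → Disjoint (T : Set β) U₁) ∧ (v₂ ∈ S → Disjoint (T : Set β) U₂) := by
  have hT : ∀ t ∈ T, t ≠ v := fun t ht => ne_of_mem_of_not_mem ht hvT
  constructor
  · intro h
    refine ⟨fun a ha b hb hne hadj => ?_, fun a ha b hb hne hadj => ?_,
      fun hv₁ => Set.disjoint_left.2 fun t ht htU => ?_,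
      fun hv₂ => Set.disjoint_left.2 fun t ht htU => ?_⟩
    · exact @h (.inl a) (by simpa using ha) (.inl b) (by simpa using hb) (by simpa)
        (by simpa using hadj)
    · exact @h (.inr ⟨a, hT a ha⟩) (by simpa using ha) (.inr ⟨b, hT b hb⟩) (by simpa using hb)
        (by simpa using hne) (by simpa using hadj)
    · exact @h (.inl v₁) (by simpa using hv₁) (.inr ⟨t, hT t ht⟩) (by simpa using ht)
        (by simp) (by simp [htU])
    · exact @h (.inl v₂) (by simpa using hv₂) (.inr ⟨t, hT t ht⟩) (by simpa using ht)
        (by simp) (by simp [htU])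
  · rintro ⟨hS, hT, h₁, h₂⟩ (a | a) ha (b | b) hb hne hadj <;>
      simp only [Finset.mem_coe, Finset.inl_mem_disjSum, Finset.inr_mem_disjSum,
        Finset.mem_subtype] at ha hb
    · exact hS ha hb (by simpa using hne) (by simpa using hadj)
    · rcases evComp_adj_inl_inr.1 hadj with ⟨rfl, hbU⟩ | ⟨rfl, hbU⟩
      exacts [Set.disjoint_left.1 (h₁ ha) hb hbU, Set.disjoint_left.1 (h₂ ha) hb hbU]
    · rcases evComp_adj_inr_inl.1 hadj with ⟨rfl, haU⟩ | ⟨rfl, haU⟩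
      exacts [Set.disjoint_left.1 (h₁ hb) ha haU, Set.disjoint_left.1 (h₂ hb) ha haU]
    · exact hT ha hb (by simpa [Subtype.ext_iff] using hne) (by simpa using hadj)

section Bounds

variable [Finite α] [Finite β]

theorem le_indepNum_evComp [DecidableEq β] {S : Finset α} {T : Finset β} (hvT : v ∉ T)
    (hS : (G.deleteEdges {s(v₁, v₂)}).IsIndepSet ↑S) (hT : H.IsIndepSet ↑T)
    (h₁ : v₁ ∈ S → Disjoint (T : Set β) U₁) (h₂ : v₂ ∈ S → Disjoint (T : Set β) U₂) :
    #S + #T ≤ (evComp G v₁ v₂ H v U₁ U₂).indepNum := by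
  have := ((isIndepSet_evComp_disjSum_iff hvT).2 ⟨hS, hT, h₁, h₂⟩).card_le_indepNum
  rwa [Finset.card_disjSum, Finset.card_subtype,
    Finset.filter_true_of_mem fun t ht => ne_of_mem_of_not_mem ht hvT] at this

theorem indepNum_evComp_le (hN : H.neighborSet v ⊆ U₁ ∪ U₂) :
    (evComp G v₁ v₂ H v U₁ U₂).indepNum ≤ G.indepNum + H.indepNum := by
  classical
  obtain ⟨s, hs, hcard⟩ := (evComp G v₁ v₂ H v U₁ U₂).exists_isNIndepSet_indepNum
  set T := s.toRight.map (Function.Embedding.subtype (· ≠ v))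
  have hvT : v ∉ T := by simp [T]
  have hsT : T.subtype (· ≠ v) = s.toRight := by ext t; simp [T, t.2]
  rw [← Finset.toLeft_disjSum_toRight (u := s), ← hsT] at hs hcard
  obtain ⟨hS, hT, h₁, h₂⟩ := (isIndepSet_evComp_disjSum_iff hvT).1 hs
  rw [← hcard, Finset.card_disjSum, Finset.card_subtype,
    Finset.filter_true_of_mem fun t ht => ne_of_mem_of_not_mem ht hvT]
  by_cases hboth : v₁ ∈ s.toLeft ∧ v₂ ∈ s.toLeft
  · have hTv : H.IsIndepSet ↑(insert v T) := by
      rw [Finset.coe_insert]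
      refine hT.insert_of_notMem hvT fun t ht => ?_
      have hvt : ¬H.Adj v t := fun hvt => (hN hvt).elim
        (Set.disjoint_left.1 (h₁ hboth.1) ht) (Set.disjoint_left.1 (h₂ hboth.2) ht)
      exact ⟨hvt, fun htv => hvt htv.symm⟩
    have hTv' := hTv.card_le_indepNum
    rw [Finset.card_insert_of_notMem hvT] at hTv'
    have := hS.card_le_indepNum
    have := G.indepNum_deleteEdges_le v₁ v₂
    omega
  · have hSG : G.IsIndepSet ↑s.toLeft := by
      rcases not_and_or.1 hboth with h | h
      · exact hS.of_deleteEdges h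
      · rw [Sym2.eq_swap] at hS
        exact hS.of_deleteEdges h
    have := hSG.card_le_indepNum
    have := hT.card_le_indepNum
    omega

theorem le_indepNum_evComp_of_mem (hG : (G.deleteEdges {s(v₁, v₂)}).indepNum = G.indepNum + 1)
    {T : Finset β} (hT : H.IsNIndepSet H.indepNum T) (hvT : v ∈ T)
    (hU : U₁ ∪ U₂ ⊆ H.neighborSet v) :
    G.indepNum + H.indepNum ≤ (evComp G v₁ v₂ H v U₁ U₂).indepNum := by
  classical
  obtain ⟨S, hS, -, -⟩ := exists_isNIndepSet_deleteEdges_of_critical hG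
  have hdisj : ∀ U ⊆ U₁ ∪ U₂, Disjoint (↑(T.erase v) : Set β) U := fun U hU' =>
    Set.disjoint_left.2 fun t ht htU => hT.isIndepSet.not_adj_of_mem hvT
      (Finset.mem_of_mem_erase ht) (hU (hU' htU))
  have := le_indepNum_evComp (Finset.notMem_erase v T) hS.isIndepSet
    (Set.Pairwise.mono (by simp) hT.isIndepSet) (fun _ => hdisj U₁ Set.subset_union_left)
    (fun _ => hdisj U₂ Set.subset_union_right)
  have hpos := Finset.card_pos.2 ⟨v, hvT⟩
  rw [hS.card_eq, Finset.card_erase_of_mem hvT, hT.card_eq] at this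
  rw [hT.card_eq] at hpos
  omega

end Bounds

section AlphaCritical

variable [Fintype α] [Fintype β]

/-- A maximum independent set of `H` meeting `N(v)` in a single vertex of `U₁` is compatible
with any stable set avoiding `v₁`. -/
theorem add_indepNum_le_evComp_of_notMem (hH : IsAlphaCritical H)
    (hU : U₁ ∪ U₂ ⊆ H.neighborSet v) (hdisj : Disjoint U₁ U₂) (hU₁ : U₁.Nonempty)
    {S : Finset α} (hS : (G.deleteEdges {s(v₁, v₂)}).IsIndepSet ↑S) (hv₁ : v₁ ∉ S) :
    #S + H.indepNum ≤ (evComp G v₁ v₂ H v U₁ U₂).indepNum := by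
  classical
  obtain ⟨u, hu⟩ := hU₁
  have hvu : H.Adj v u := hU (Or.inl hu)
  obtain ⟨T, hT, hvT, -, hTu⟩ :=
    exists_isNIndepSet_notMem_of_critical (hH.indepNum_deleteEdges hvu) hvu
  rw [← hT.card_eq]
  exact le_indepNum_evComp hvT hS hT.isIndepSet (absurd · hv₁) fun _ =>
    disjoint_of_forall_adj_eq hTu (Set.union_subset_iff.1 hU).2 (Set.disjoint_left.1 hdisj hu)

theorem indepNum_add_lt_evComp_deleteEdges_inl (hG : IsAlphaCritical G)
    (hH : IsAlphaCritical H) (he : G.Adj v₁ v₂) (hU : U₁ ∪ U₂ ⊆ H.neighborSet v)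
    (hdisj : Disjoint U₁ U₂) (hU₁ : U₁.Nonempty) (hU₂ : U₂.Nonempty) {a b : α}
    (hab : (evComp G v₁ v₂ H v U₁ U₂).Adj (.inl a) (.inl b)) :
    G.indepNum + H.indepNum <
      ((evComp G v₁ v₂ H v U₁ U₂).deleteEdges {s(.inl a, .inl b)}).indepNum := by
  obtain ⟨hab, hne⟩ := evComp_adj_inl_inl.1 hab
  obtain ⟨S, hS, -, -⟩ := exists_isNIndepSet_deleteEdges_of_critical (hG.indepNum_deleteEdges hab)
  have hS' (x y : α) : ((G.deleteEdges {s(a, b)}).deleteEdges {s(x, y)}).IsIndepSet ↑S :=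
    hS.isIndepSet.anti (deleteEdges_le _)
  have hv : v₁ ∉ S ∨ v₂ ∉ S := by
    by_contra! h
    exact hS.isIndepSet.not_adj_of_mem h.1 h.2 (by simp [he, hne.symm])
  have key : #S + H.indepNum ≤ (evComp (G.deleteEdges {s(a, b)}) v₁ v₂ H v U₁ U₂).indepNum := by
    rcases hv with hv | hv
    · exact add_indepNum_le_evComp_of_notMem hH hU hdisj hU₁ (hS' v₁ v₂) hv
    · rw [evComp_comm]
      exact add_indepNum_le_evComp_of_notMem hH (Set.union_comm U₁ U₂ ▸ hU) hdisj.symm hU₂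
        (hS' v₂ v₁) hv
  rw [evComp_deleteEdges_inl]
  rw [hS.card_eq] at key
  omega

theorem indepNum_add_lt_evComp_sdiff_singleton (hG : (G.deleteEdges {s(v₁, v₂)}).indepNum = G.indepNum + 1)
    (hH : IsAlphaCritical H) (hU : U₁ ∪ U₂ ⊆ H.neighborSet v) (hdisj : Disjoint U₁ U₂)
    {u : β} (hu : u ∈ U₁) :
    G.indepNum + H.indepNum < (evComp G v₁ v₂ H v (U₁ \ {u}) U₂).indepNum := by
  classical
  have hvu : H.Adj v u := hU (Or.inl hu)
  obtain ⟨S, hS, -, -⟩ := exists_isNIndepSet_deleteEdges_of_critical hG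
  obtain ⟨T, hT, hvT, -, hTu⟩ :=
    exists_isNIndepSet_notMem_of_critical (hH.indepNum_deleteEdges hvu) hvu
  obtain ⟨hU₁, hU₂⟩ := Set.union_subset_iff.1 hU
  have := le_indepNum_evComp (U₁ := U₁ \ {u}) hvT hS.isIndepSet hT.isIndepSet
    (fun _ => disjoint_of_forall_adj_eq hTu (Set.sdiff_subset.trans hU₁) (by simp))
    (fun _ => disjoint_of_forall_adj_eq hTu hU₂ (Set.disjoint_left.1 hdisj hu))
  rw [hS.card_eq, hT.card_eq] at this
  omega

theorem indepNum_add_lt_evComp_deleteEdges_inl_inr (hG : IsAlphaCritical G)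
    (hH : IsAlphaCritical H) (he : G.Adj v₁ v₂) (hU : U₁ ∪ U₂ ⊆ H.neighborSet v)
    (hdisj : Disjoint U₁ U₂) {a : α} {t : {b : β // b ≠ v}}
    (hat : (evComp G v₁ v₂ H v U₁ U₂).Adj (.inl a) (.inr t)) :
    G.indepNum + H.indepNum <
      ((evComp G v₁ v₂ H v U₁ U₂).deleteEdges {s(.inl a, .inr t)}).indepNum := by
  rcases evComp_adj_inl_inr.1 hat with ⟨rfl, ht⟩ | ⟨rfl, ht⟩
  · rw [evComp_deleteEdges_inl_inr he.ne]
    exact indepNum_add_lt_evComp_sdiff_singleton (hG.indepNum_deleteEdges he) hH hU hdisj ht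
  · rw [evComp_comm, evComp_deleteEdges_inl_inr he.ne']
    exact indepNum_add_lt_evComp_sdiff_singleton (hG.indepNum_deleteEdges he.symm) hH
      (Set.union_comm U₁ U₂ ▸ hU) hdisj.symm ht

theorem indepNum_add_lt_evComp_deleteEdges_inr_inr (hGc : TwoConnected G)
    (hG : IsAlphaCritical G) (hH : IsAlphaCritical H) (he : G.Adj v₁ v₂)
    (hU : U₁ ∪ U₂ ⊆ H.neighborSet v) {a b : {b : β // b ≠ v}}
    (hab : (evComp G v₁ v₂ H v U₁ U₂).Adj (.inr a) (.inr b)) :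
    G.indepNum + H.indepNum <
      ((evComp G v₁ v₂ H v U₁ U₂).deleteEdges {s(.inr a, .inr b)}).indepNum := by
  classical
  rw [evComp_adj_inr_inr] at hab
  rw [evComp_deleteEdges_inr]
  have hHab := hH.indepNum_deleteEdges hab
  obtain ⟨T, hT, -, -⟩ := exists_isNIndepSet_deleteEdges_of_critical hHab
  by_cases hvT : v ∈ T
  · have hU' : U₁ ∪ U₂ ⊆ (H.deleteEdges {s(↑a, ↑b)}).neighborSet v := fun x hx => by
      simpa [a.2.symm, b.2.symm] using hU hx
    have := le_indepNum_evComp_of_mem (hG.indepNum_deleteEdges he) (hHab ▸ hT) hvT hU'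
    omega
  · obtain ⟨S, hS, hv₁, hv₂⟩ := hG.exists_isNIndepSet_notMem_notMem hGc he
    have := le_indepNum_evComp (U₁ := U₁) (U₂ := U₂) hvT
      (hS.isIndepSet.anti (deleteEdges_le _)) hT.isIndepSet (absurd · hv₁) (absurd · hv₂)
    rw [hS.card_eq, hT.card_eq] at this
    omega

end AlphaCritical

end EvComp
end SimpleGraph

theorem evComp_isAlphaCritical_general {α β : Type*} [Fintype α] [Fintype β] [DecidableEq β]
    (G : SimpleGraph α) (v₁ v₂ : α) (H : SimpleGraph β) (v : β) (U₁ U₂ : Set β)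
    (hGc : TwoConnected G)
    (hG : IsAlphaCritical G) (hH : IsAlphaCritical H)
    (he : G.Adj v₁ v₂)
    (hU : U₁ ∪ U₂ = H.neighborSet v) (hdisj : Disjoint U₁ U₂)
    (hU₁ : U₁.Nonempty) (hU₂ : U₂.Nonempty) :
    IsAlphaCritical (evComp G v₁ v₂ H v U₁ U₂) := by
  obtain ⟨u, hu⟩ := hU₁
  have hvu : H.Adj v u := hU.le (Or.inl hu)
  obtain ⟨T, hT, -, hvT, -⟩ :=
    exists_isNIndepSet_notMem_of_critical (hH.indepNum_deleteEdges hvu.symm) hvu.symm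
  have hW : (evComp G v₁ v₂ H v U₁ U₂).indepNum = G.indepNum + H.indepNum :=
    le_antisymm (indepNum_evComp_le hU.ge)
      (le_indepNum_evComp_of_mem (hG.indepNum_deleteEdges he) hT hvT hU.le)
  intro x y hxy
  simp only [alphaNum_eq_indepNum]
  refine le_antisymm (indepNum_deleteEdges_le x y) ?_
  rw [hW]
  rcases x with a | s <;> rcases y with b | t
  · exact indepNum_add_lt_evComp_deleteEdges_inl hG hH he hU.le hdisj ⟨u, hu⟩ hU₂ hxy
  · exact indepNum_add_lt_evComp_deleteEdges_inl_inr hG hH he hU.le hdisj hxy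
  · rw [Sym2.eq_swap]
    exact indepNum_add_lt_evComp_deleteEdges_inl_inr hG hH he hU.le hdisj hxy.symm
  · exact indepNum_add_lt_evComp_deleteEdges_inr_inr hGc hG hH he hU.le hxy

/-- If `G` and `H` are 2-connected α-critical graphs, `e = {v₁, v₂}`
an edge of `G`, `v` a vertex of `H`, and `N_H(v) = U₁ ⊔ U₂` a partition into two
nonempty disjoint sets, then the edge-vertex composition `c(G, e, H, v)` is an
α-critical graph. -/
theorem evComp_isAlphaCritical {α β : Type*} [Fintype α] [Fintype β] [DecidableEq β]
    (G : SimpleGraph α) (v₁ v₂ : α) (H : SimpleGraph β) (v : β) (U₁ U₂ : Set β)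
    (hGc : TwoConnected G) (hHc : TwoConnected H)
    (hG : IsAlphaCritical G) (hH : IsAlphaCritical H)
    (he : G.Adj v₁ v₂)
    (hU : U₁ ∪ U₂ = H.neighborSet v) (hdisj : Disjoint U₁ U₂)
    (hU₁ : U₁.Nonempty) (hU₂ : U₂.Nonempty) :
    IsAlphaCritical (evComp G v₁ v₂ H v U₁ U₂) :=
  evComp_isAlphaCritical_general G v₁ v₂ H v U₁ U₂ hGc hG hH he hU hdisj hU₁ hU₂
end
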